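/- arXiv:1907.02119 — 3 statements merged into one kernel-verified Lean document; each statement's English description precedes it below -/
import Mathlib

section
/- Let M be a regular right R-module such that R is a Rickart *-ring and S = End_R(M) is a Rickart *-ring. Then the star relation ≤⋆ (defined by: m1 ≤⋆ m2 if there exist a self-adjoint idempotent f ∈ S and a self-adjoint idempotent a ∈ R such that l_S(m1) = l_S(f), r_R(m1) = r_R(a), f(m1) = f(m2), and m1·a = m2·a) is a partial order on M. -/
/- A right `R`-module is encoded as a left `Rᵐᵒᵖ`-module: `m · r = MulOpposite.op r • m`.
Likewise `R` itself is a right `R`-module via `op r • a = a * r`, so the dual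
`M* = Hom_R(M, R)` is `M →ₗ[Rᵐᵒᵖ] R` and `S = End_R(M)` is `Module.End Rᵐᵒᵖ M`. -/

open MulOpposite

/-- The minus relation `m₁ ≤⁻ m₂` on a right `R`-module `M`: there exists `φ ∈ M*`
with `m₁ = m₁·φ(m₁)`, `m₁·φ(x) = m₂·φ(x)` for all `x ∈ M`, and `φ(m₁) = φ(m₂)`. -/
def MinusLE (R : Type*) [Ring R] {M : Type*} [AddCommGroup M] [Module Rᵐᵒᵖ M]
    (m₁ m₂ : M) : Prop :=
  ∃ φ : M →ₗ[Rᵐᵒᵖ] R,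
    m₁ = op (φ m₁) • m₁ ∧ (∀ x : M, op (φ x) • m₁ = op (φ x) • m₂) ∧ φ m₁ = φ m₂

/-- An element `m` of a right `R`-module is (Zelmanowitz) regular if `m = m·φ(m)`
for some `φ ∈ M*`. -/
def IsRegularElem (R : Type*) [Ring R] {M : Type*} [AddCommGroup M] [Module Rᵐᵒᵖ M]
    (m : M) : Prop :=
  ∃ φ : M →ₗ[Rᵐᵒᵖ] R, m = op (φ m) • m

/-- The star relation `m₁ ≤⋆ m₂` on a right module over a `*`-ring `R` whose
endomorphism ring `S = End_R(M)` also carries an involution: there exist a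
self-adjoint idempotent `f ∈ S` and a self-adjoint idempotent `a ∈ R` with
`l_S(m₁) = l_S(f)`, `r_R(m₁) = r_R(a)`, `f(m₁) = f(m₂)`, and `m₁·a = m₂·a`. -/
def StarLE (R : Type*) [Ring R] [StarRing R] {M : Type*} [AddCommGroup M]
    [Module Rᵐᵒᵖ M] [StarRing (Module.End Rᵐᵒᵖ M)] (m₁ m₂ : M) : Prop :=
  ∃ (f : Module.End Rᵐᵒᵖ M) (a : R), f * f = f ∧ star f = f ∧ a * a = a ∧ star a = a ∧
    {g : Module.End Rᵐᵒᵖ M | g m₁ = 0} = {g : Module.End Rᵐᵒᵖ M | g * f = 0} ∧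
    {r : R | op r • m₁ = (0 : M)} = {x : R | a * x = 0} ∧
    f m₁ = f m₂ ∧ op a • m₁ = op a • m₂

/-!
Reflexivity: for a regular element `m = m·φ(m)`, the endomorphism `s = m·φ(-)` has the same
left annihilator in `S` as `m`, and `φ(m)` has the same right annihilator in `R` as `m`; the
Rickart property writes these annihilators as `S q` and `p R` for projections `q`, `p`, which
are the annihilators of the projections `1 - q` and `1 - p`.

Transitivity: the projections `f, a` witnessing `m₁ ≤⋆ m₂` also witness `m₁ ≤⋆ m₃`, because
`l_S(m₁) = l_S(f)` and `r_R(m₁) = r_R(a)` force `f = f f'` and `a = a' a` for the projections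
`f', a'` witnessing `m₂ ≤⋆ m₃`.

Antisymmetry: write `d = m₂ - m₁ = d·b` with `b = φ(d)`. Both `m₁` and `m₂` are killed by `b*`,
so `b b* = φ(d·b*) = 0`, and the involution of a Rickart `*`-ring is proper, so `b = 0 = d`.
-/

section Rickart

variable {A : Type*}

theorem eq_zero_of_mul_star_self_eq_zero [SemigroupWithZero A] [StarMul A] {b : A}
    (h : ∃ p : A, p * p = p ∧ star p = p ∧ {x : A | b * x = 0} = {x : A | ∃ y : A, x = p * y})
    (hb : b * star b = 0) : b = 0 := by
  obtain ⟨p, hp, hps, hann⟩ := h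
  have hbp : b * p = 0 := show p ∈ {x : A | b * x = 0} from hann ▸ ⟨p, hp.symm⟩
  obtain ⟨y, hy⟩ : star b ∈ {x : A | ∃ y : A, x = p * y} := hann ▸ hb
  have hb_eq : b = star y * p := by simpa only [star_star, star_mul, hps] using congrArg star hy
  rw [hb_eq, ← hp, ← mul_assoc, ← hb_eq, hbp]

variable [Ring A] [StarRing A]

theorem exists_isStarProjection_setOf_mul_eq_zero {b : A}
    (h : ∃ p : A, p * p = p ∧ star p = p ∧ {x : A | b * x = 0} = {x : A | ∃ y : A, x = p * y}) :
    ∃ a : A, IsStarProjection a ∧ {x : A | b * x = 0} = {x : A | a * x = 0} := by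
  obtain ⟨p, hp, hann⟩ : ∃ p : A, IsStarProjection p ∧ _ :=
    h.imp fun p ⟨hp, hps, hann⟩ => ⟨(isStarProjection_iff p).2 ⟨hp, hps⟩, hann⟩
  refine ⟨1 - p, hp.one_sub, hann.trans (Set.ext fun x => ⟨?_, fun hx => ⟨x, ?_⟩⟩)⟩
  · rintro ⟨y, rfl⟩
    rw [Set.mem_ofPred_eq, ← mul_assoc, hp.one_sub_mul_self, zero_mul]
  · rwa [Set.mem_ofPred_eq, sub_mul, one_mul, sub_eq_zero] at hx

theorem exists_isStarProjection_setOf_mul_eq_zero' {b : A}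
    (h : ∃ q : A, q * q = q ∧ star q = q ∧ {x : A | x * b = 0} = {x : A | ∃ y : A, x = y * q}) :
    ∃ f : A, IsStarProjection f ∧ {x : A | x * b = 0} = {x : A | x * f = 0} := by
  obtain ⟨q, hq, hann⟩ : ∃ q : A, IsStarProjection q ∧ _ :=
    h.imp fun q ⟨hq, hqs, hann⟩ => ⟨(isStarProjection_iff q).2 ⟨hq, hqs⟩, hann⟩
  refine ⟨1 - q, hq.one_sub, hann.trans (Set.ext fun x => ⟨?_, fun hx => ⟨x, ?_⟩⟩)⟩
  · rintro ⟨y, rfl⟩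
    rw [Set.mem_ofPred_eq, mul_assoc, hq.mul_one_sub_self, mul_zero]
  · rw [Set.mem_ofPred_eq, mul_sub, mul_one, sub_eq_zero] at hx
    exact hx

end Rickart

section RightModule

variable {R : Type*} [Ring R] {M : Type*} [AddCommGroup M] [Module Rᵐᵒᵖ M]

def dualSmulRight (φ : M →ₗ[Rᵐᵒᵖ] R) (m : M) : Module.End Rᵐᵒᵖ M where
  toFun x := op (φ x) • m
  map_add' x y := by rw [map_add, op_add, add_smul]
  map_smul' r x := by
    rw [map_smul, RingHom.id_apply, ← op_unop r, op_smul_eq_mul, op_mul, mul_smul]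

@[simp]
theorem dualSmulRight_apply (φ : M →ₗ[Rᵐᵒᵖ] R) (m x : M) :
    dualSmulRight φ m x = op (φ x) • m :=
  rfl

theorem setOf_apply_eq_zero_eq_setOf_mul_dualSmulRight_eq_zero {φ : M →ₗ[Rᵐᵒᵖ] R} {m : M}
    (hφ : m = op (φ m) • m) :
    {g : Module.End Rᵐᵒᵖ M | g m = 0} = {g : Module.End Rᵐᵒᵖ M | g * dualSmulRight φ m = 0} := by
  ext g
  simp only [Set.mem_ofPred_eq]
  refine ⟨fun hg => LinearMap.ext fun x => ?_, fun hg => ?_⟩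
  · rw [Module.End.mul_apply, dualSmulRight_apply, map_smul, hg, smul_zero, LinearMap.zero_apply]
  · simpa only [Module.End.mul_apply, dualSmulRight_apply, ← hφ, LinearMap.zero_apply] using
      LinearMap.congr_fun hg m

theorem setOf_op_smul_eq_zero_eq_setOf_mul_eq_zero {φ : M →ₗ[Rᵐᵒᵖ] R} {m : M}
    (hφ : m = op (φ m) • m) :
    {r : R | op r • m = (0 : M)} = {x : R | φ m * x = 0} := by
  ext x
  refine ⟨fun hx => ?_, fun hx => ?_⟩
  · rw [Set.mem_ofPred_eq, ← op_smul_eq_mul, ← map_smul, hx, map_zero]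
  · rw [Set.mem_ofPred_eq, hφ, ← mul_smul, ← op_mul, hx, op_zero, zero_smul]

theorem apply_eq_self_of_setOf_apply_eq_zero_eq {f : Module.End Rᵐᵒᵖ M} {m : M}
    (hf : IsIdempotentElem f)
    (h : {g : Module.End Rᵐᵒᵖ M | g m = 0} = {g : Module.End Rᵐᵒᵖ M | g * f = 0}) :
    f m = m := by
  have : (1 - f) m = 0 := show 1 - f ∈ {g : Module.End Rᵐᵒᵖ M | g m = 0} from
    h ▸ hf.one_sub_mul_self
  rwa [LinearMap.sub_apply, Module.End.one_apply, sub_eq_zero, eq_comm] at this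

theorem op_smul_eq_self_of_setOf_op_smul_eq_zero_eq {a : R} {m : M} (ha : IsIdempotentElem a)
    (h : {r : R | op r • m = (0 : M)} = {x : R | a * x = 0}) :
    op a • m = m := by
  have : op (1 - a) • m = 0 := show 1 - a ∈ {r : R | op r • m = (0 : M)} from
    h ▸ ha.mul_one_sub_self
  rwa [op_sub, op_one, sub_smul, one_smul, sub_eq_zero, eq_comm] at this

theorem mul_eq_of_setOf_apply_eq_zero_eq {f f' : Module.End Rᵐᵒᵖ M} {m : M}
    (h : {g : Module.End Rᵐᵒᵖ M | g m = 0} = {g : Module.End Rᵐᵒᵖ M | g * f = 0})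
    (hf' : f' m = m) :
    f' * f = f := by
  have : (1 - f') * f = 0 := show 1 - f' ∈ {g : Module.End Rᵐᵒᵖ M | g * f = 0} from
    h ▸ by rw [Set.mem_ofPred_eq, LinearMap.sub_apply, Module.End.one_apply, hf', sub_self]
  rwa [sub_mul, one_mul, sub_eq_zero, eq_comm] at this

theorem mul_eq_of_setOf_op_smul_eq_zero_eq {a a' : R} {m : M}
    (h : {r : R | op r • m = (0 : M)} = {x : R | a * x = 0}) (ha' : op a' • m = m) :
    a * a' = a := by
  have : a * (1 - a') = 0 := show 1 - a' ∈ {x : R | a * x = 0} from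
    h ▸ by rw [Set.mem_ofPred_eq, op_sub, op_one, sub_smul, one_smul, ha', sub_self]
  rwa [mul_sub, mul_one, sub_eq_zero, eq_comm] at this

end RightModule

namespace StarLE

variable {R : Type*} [Ring R] [StarRing R] {M : Type*} [AddCommGroup M] [Module Rᵐᵒᵖ M]
  [StarRing (Module.End Rᵐᵒᵖ M)] {m₁ m₂ m₃ : M}

theorem refl_of_isRegularElem {m : M} (hm : IsRegularElem R m)
    (hR : ∀ b : R, ∃ p : R, p * p = p ∧ star p = p ∧
      {x : R | b * x = 0} = {x : R | ∃ y : R, x = p * y})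
    (hS : ∀ s : Module.End Rᵐᵒᵖ M, ∃ q : Module.End Rᵐᵒᵖ M, q * q = q ∧ star q = q ∧
      {x : Module.End Rᵐᵒᵖ M | x * s = 0} = {x : Module.End Rᵐᵒᵖ M | ∃ y, x = y * q}) :
    StarLE R m m := by
  obtain ⟨φ, hφ⟩ := hm
  obtain ⟨f, hf, hlf⟩ := exists_isStarProjection_setOf_mul_eq_zero' (hS (dualSmulRight φ m))
  obtain ⟨a, ha, hra⟩ := exists_isStarProjection_setOf_mul_eq_zero (hR (φ m))
  exact ⟨f, a, hf.isIdempotentElem, hf.isSelfAdjoint, ha.isIdempotentElem, ha.isSelfAdjoint,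
    (setOf_apply_eq_zero_eq_setOf_mul_dualSmulRight_eq_zero hφ).trans hlf,
    (setOf_op_smul_eq_zero_eq_setOf_mul_eq_zero hφ).trans hra, rfl, rfl⟩

theorem trans (h₁₂ : StarLE R m₁ m₂) (h₂₃ : StarLE R m₂ m₃) : StarLE R m₁ m₃ := by
  obtain ⟨f, a, hf, hfs, ha, has, hlf, hra, hfm, ham⟩ := h₁₂
  obtain ⟨f', a', hf', hf's, ha', ha's, hlf', hra', hfm', ham'⟩ := h₂₃
  have hf'm₂ : f' m₂ = m₂ := apply_eq_self_of_setOf_apply_eq_zero_eq hf' hlf'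
  have ha'm₂ : op a' • m₂ = m₂ := op_smul_eq_self_of_setOf_op_smul_eq_zero_eq ha' hra'
  have hm₁f : m₁ = f m₂ := by rw [← hfm, apply_eq_self_of_setOf_apply_eq_zero_eq hf hlf]
  have hm₁a : m₁ = op a • m₂ := by rw [← ham, op_smul_eq_self_of_setOf_op_smul_eq_zero_eq ha hra]
  have hff' : f * f' = f := by
    have : f' * f = f :=
      mul_eq_of_setOf_apply_eq_zero_eq hlf (by rw [hm₁a, map_smul, hf'm₂])
    simpa only [star_mul, hfs, hf's] using congrArg star this
  have ha'a : a' * a = a := by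
    have : a * a' = a :=
      mul_eq_of_setOf_op_smul_eq_zero_eq hra (by rw [hm₁f, ← map_smul, ha'm₂])
    simpa only [star_mul, has, ha's] using congrArg star this
  refine ⟨f, a, hf, hfs, ha, has, hlf, hra, ?_, ?_⟩
  · rw [hfm, ← hff', Module.End.mul_apply, Module.End.mul_apply, hfm']
  · rw [ham, ← ha'a, op_mul, mul_smul, mul_smul, ham']

theorem op_star_smul_eq_zero (h : StarLE R m₁ m₂) {b : R}
    (hb : ∀ x : R, op x • m₁ = op x • m₂ → b * x = 0) :
    op (star b) • m₁ = 0 := by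
  obtain ⟨-, a, -, -, -, has, -, hra, -, ham⟩ := h
  have hab : a * star b = 0 := by
    simpa only [star_mul, has, star_zero] using congrArg star (hb a ham)
  exact show star b ∈ {r : R | op r • m₁ = (0 : M)} from hra ▸ hab

theorem antisymm_of_isRegularElem (hproper : ∀ b : R, b * star b = 0 → b = 0)
    (hd : IsRegularElem R (m₂ - m₁)) (h₁₂ : StarLE R m₁ m₂) (h₂₁ : StarLE R m₂ m₁) :
    m₁ = m₂ := by
  obtain ⟨φ, hφ⟩ := hd
  set b := φ (m₂ - m₁)
  have hb : ∀ x : R, op x • m₁ = op x • m₂ → b * x = 0 := fun x hx => by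
    rw [← op_smul_eq_mul, ← map_smul, smul_sub, hx, sub_self, map_zero]
  have hbb : b * star b = 0 := by
    rw [← op_smul_eq_mul, ← map_smul, smul_sub, h₂₁.op_star_smul_eq_zero fun x hx => hb x hx.symm,
      h₁₂.op_star_smul_eq_zero hb, sub_self, map_zero]
  rw [← sub_eq_zero, ← neg_sub, neg_eq_zero, hφ, hproper b hbb, op_zero, zero_smul]

end StarLE

/-- If `M` is a regular right module over a Rickart `*`-ring `R` and
`S = End_R(M)` is also a Rickart `*`-ring, then the star relation is a partial
order on `M`. -/
theorem starLE_isPartialOrder (R : Type*) [Ring R] [StarRing R] {M : Type*}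
    [AddCommGroup M] [Module Rᵐᵒᵖ M] [StarRing (Module.End Rᵐᵒᵖ M)]
    (hM : ∀ m : M, IsRegularElem R m)
    (hRickartR : ∀ b : R,
      (∃ p : R, p * p = p ∧ star p = p ∧
        {x : R | b * x = 0} = {x : R | ∃ y : R, x = p * y}) ∧
      (∃ q : R, q * q = q ∧ star q = q ∧
        {x : R | x * b = 0} = {x : R | ∃ y : R, x = y * q}))
    (hRickartS : ∀ s : Module.End Rᵐᵒᵖ M,
      (∃ p : Module.End Rᵐᵒᵖ M, p * p = p ∧ star p = p ∧
        {x : Module.End Rᵐᵒᵖ M | s * x = 0} = {x : Module.End Rᵐᵒᵖ M | ∃ y, x = p * y}) ∧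
      (∃ q : Module.End Rᵐᵒᵖ M, q * q = q ∧ star q = q ∧
        {x : Module.End Rᵐᵒᵖ M | x * s = 0} = {x : Module.End Rᵐᵒᵖ M | ∃ y, x = y * q})) :
    (∀ m : M, StarLE R m m) ∧
    (∀ m₁ m₂ : M, StarLE R m₁ m₂ → StarLE R m₂ m₁ → m₁ = m₂) ∧
    (∀ m₁ m₂ m₃ : M, StarLE R m₁ m₂ → StarLE R m₂ m₃ → StarLE R m₁ m₃) := by
  have hproper (b : R) : b * star b = 0 → b = 0 :=
    eq_zero_of_mul_star_self_eq_zero (hRickartR b).1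
  exact ⟨fun m => StarLE.refl_of_isRegularElem (hM m) (fun b => (hRickartR b).1)
      (fun s => (hRickartS s).2),
    fun m₁ m₂ => StarLE.antisymm_of_isRegularElem hproper (hM (m₂ - m₁)),
    fun _ _ _ => StarLE.trans⟩
end

section
/- Let M be a regular right R-module and m1, m2 ∈ M. Then m1 ≤⁻ m2 if and only if there exist an idempotent f ∈ S and an idempotent a ∈ R such that l_S(f) ⊆ l_S(m1), r_R(a) ⊆ r_R(m1), f(m1) = f(m2), and m1·a = m2·a. -/
/- A right `R`-module is encoded as a left `Rᵐᵒᵖ`-module: `m · r = MulOpposite.op r • m`.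
Likewise `R` itself is a right `R`-module via `op r • a = a * r`, so the dual
`M* = Hom_R(M, R)` is `M →ₗ[Rᵐᵒᵖ] R` and `S = End_R(M)` is `Module.End Rᵐᵒᵖ M`. -/

open MulOpposite

/-! The minus relation `m₁ ≤⁻ m₂`, witnessed by `φ`, yields the idempotents `f = m₁·φ(-) ∈ S`
and `a = φ(m₁) ∈ R`; the annihilator inclusions hold because `m₁ = f(m₁) = m₁·a`.
Conversely the annihilator inclusions force `f(m₁) = m₁` and `m₁·a = m₁`, so if `m₁ = m₁·ψ(m₁)`
then `a·ψ(f(-)) ∈ M*` witnesses `m₁ ≤⁻ m₂`. -/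

section RightModule

variable {R : Type*} [Ring R] {M : Type*} [AddCommGroup M] [Module Rᵐᵒᵖ M]

def rankOneEnd (φ : M →ₗ[Rᵐᵒᵖ] R) (m : M) : Module.End Rᵐᵒᵖ M where
  toFun x := op (φ x) • m
  map_add' x y := by simp only [map_add, op_add, add_smul]
  map_smul' r x := by
    induction r using MulOpposite.rec' with
    | h r => simp only [map_smul, op_smul_eq_mul, RingHom.id_apply, op_smul_op_smul]

@[simp]
theorem rankOneEnd_apply (φ : M →ₗ[Rᵐᵒᵖ] R) (m x : M) : rankOneEnd φ m x = op (φ x) • m :=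
  rfl

section Regular

variable {φ : M →ₗ[Rᵐᵒᵖ] R} {m : M}

theorem isIdempotentElem_rankOneEnd (h : m = op (φ m) • m) :
    IsIdempotentElem (rankOneEnd φ m) := by
  ext x
  rw [Module.End.mul_apply, rankOneEnd_apply, rankOneEnd_apply, map_smul, op_smul_eq_mul,
    ← op_smul_op_smul, ← h]

theorem isIdempotentElem_apply_self (h : m = op (φ m) • m) : IsIdempotentElem (φ m) := by
  have := congrArg φ h
  rwa [map_smul, op_smul_eq_mul, eq_comm] at this

theorem apply_eq_zero_of_mul_rankOneEnd_eq_zero (h : m = op (φ m) • m)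
    {g : Module.End Rᵐᵒᵖ M} (hg : g * rankOneEnd φ m = 0) : g m = 0 := by
  simpa only [Module.End.mul_apply, rankOneEnd_apply, ← h, LinearMap.zero_apply] using
    LinearMap.congr_fun hg m

theorem op_smul_eq_zero_of_apply_self_mul_eq_zero (h : m = op (φ m) • m) {r : R}
    (hr : φ m * r = 0) : op r • m = 0 := by
  rw [h, op_smul_op_smul, hr, op_zero, zero_smul]

end Regular

theorem MinusLE.exists_idempotents {m₁ m₂ : M} (h : MinusLE R m₁ m₂) :
    ∃ (f : Module.End Rᵐᵒᵖ M) (a : R), IsIdempotentElem f ∧ IsIdempotentElem a ∧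
      {g : Module.End Rᵐᵒᵖ M | g * f = 0} ⊆ {g | g m₁ = 0} ∧
      {x : R | a * x = 0} ⊆ {r | op r • m₁ = (0 : M)} ∧
      f m₁ = f m₂ ∧ op a • m₁ = op a • m₂ := by
  obtain ⟨φ, hreg, hsmul, happly⟩ := h
  refine ⟨rankOneEnd φ m₁, φ m₁, isIdempotentElem_rankOneEnd hreg,
    isIdempotentElem_apply_self hreg, fun _ => apply_eq_zero_of_mul_rankOneEnd_eq_zero hreg,
    fun _ => op_smul_eq_zero_of_apply_self_mul_eq_zero hreg, ?_, hsmul m₁⟩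
  simp only [rankOneEnd_apply, happly]

theorem IsIdempotentElem.apply_eq_self_of_subset {f : Module.End Rᵐᵒᵖ M} {m : M}
    (hf : IsIdempotentElem f) (h : {g : Module.End Rᵐᵒᵖ M | g * f = 0} ⊆ {g | g m = 0}) :
    f m = m := by
  have hm : (1 - f) m = 0 := h (by rw [Set.mem_ofPred_eq, sub_mul, one_mul, hf.eq, sub_self])
  rwa [LinearMap.sub_apply, Module.End.one_apply, sub_eq_zero, eq_comm] at hm

theorem IsIdempotentElem.op_smul_eq_self_of_subset {a : R} {m : M} (ha : IsIdempotentElem a)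
    (h : {x : R | a * x = 0} ⊆ {r | op r • m = (0 : M)}) : op a • m = m := by
  have hm : op (1 - a) • m = 0 := h (by rw [Set.mem_ofPred_eq, mul_sub, mul_one, ha.eq, sub_self])
  rwa [op_sub, op_one, sub_smul, one_smul, sub_eq_zero, eq_comm] at hm

theorem minusLE_of_idempotents {m₁ m₂ : M} (hm₁ : IsRegularElem R m₁)
    {f : Module.End Rᵐᵒᵖ M} {a : R} (hf : IsIdempotentElem f) (ha : IsIdempotentElem a)
    (hfm₁ : {g : Module.End Rᵐᵒᵖ M | g * f = 0} ⊆ {g | g m₁ = 0})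
    (ham₁ : {x : R | a * x = 0} ⊆ {r | op r • m₁ = (0 : M)})
    (hf₁₂ : f m₁ = f m₂) (ha₁₂ : op a • m₁ = op a • m₂) : MinusLE R m₁ m₂ := by
  obtain ⟨ψ, hψ⟩ := hm₁
  have hfix : f m₁ = m₁ := hf.apply_eq_self_of_subset hfm₁
  have hafix : op a • m₁ = m₁ := ha.op_smul_eq_self_of_subset ham₁
  refine ⟨a • (ψ ∘ₗ f), ?_, fun x => ?_, ?_⟩
  · rw [LinearMap.smul_apply, LinearMap.comp_apply, hfix, smul_eq_mul, ← op_smul_op_smul,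
      hafix, ← hψ]
  · simp only [LinearMap.smul_apply, smul_eq_mul, ← op_smul_op_smul, ha₁₂]
  · simp only [LinearMap.smul_apply, LinearMap.comp_apply, hf₁₂]

end RightModule

/-- On a regular module, `m₁ ≤⁻ m₂` iff there are idempotents `f ∈ S`,
`a ∈ R` with `l_S(f) ⊆ l_S(m₁)`, `r_R(a) ⊆ r_R(m₁)`, `f(m₁) = f(m₂)`, `m₁·a = m₂·a`. -/
theorem minusLE_iff_exists_idempotents_subset (R : Type*) [Ring R] {M : Type*}
    [AddCommGroup M] [Module Rᵐᵒᵖ M] (hM : ∀ m : M, IsRegularElem R m) (m₁ m₂ : M) :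
    MinusLE R m₁ m₂ ↔
      ∃ (f : Module.End Rᵐᵒᵖ M) (a : R), f * f = f ∧ a * a = a ∧
        {g : Module.End Rᵐᵒᵖ M | g * f = 0} ⊆ {g : Module.End Rᵐᵒᵖ M | g m₁ = 0} ∧
        {x : R | a * x = 0} ⊆ {r : R | op r • m₁ = (0 : M)} ∧
        f m₁ = f m₂ ∧ op a • m₁ = op a • m₂ :=
  ⟨MinusLE.exists_idempotents, fun ⟨_, _, hf, ha, hfm₁, ham₁, hf₁₂, ha₁₂⟩ =>
    minusLE_of_idempotents (hM m₁) hf ha hfm₁ ham₁ hf₁₂ ha₁₂⟩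
end

section
/- Let M be a right R-module and m1, m2 ∈ M with m1 ≤⁻ m2. Then there exist an idempotent f ∈ S and an idempotent a ∈ R such that m1 = f(m1) = f(m2) = m1·a = m2·a. -/
/- A right `R`-module is encoded as a left `Rᵐᵒᵖ`-module: `m · r = MulOpposite.op r • m`.
Likewise `R` itself is a right `R`-module via `op r • a = a * r`, so the dual
`M* = Hom_R(M, R)` is `M →ₗ[Rᵐᵒᵖ] R` and `S = End_R(M)` is `Module.End Rᵐᵒᵖ M`. -/

open MulOpposite

section OpSmulRight

variable {R : Type*} [Ring R] {M : Type*} [AddCommGroup M] [Module Rᵐᵒᵖ M]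

def opSmulRight (φ : M →ₗ[Rᵐᵒᵖ] R) (m : M) : Module.End Rᵐᵒᵖ M where
  toFun x := op (φ x) • m
  map_add' x y := by simp only [map_add, op_add, add_smul]
  map_smul' r x := by
    rw [map_smul, ← op_unop r, op_smul_eq_mul, op_mul, mul_smul, RingHom.id_apply]

@[simp]
lemma opSmulRight_apply (φ : M →ₗ[Rᵐᵒᵖ] R) (m x : M) : opSmulRight φ m x = op (φ x) • m :=
  rfl

lemma isIdempotentElem_of_eq_op_smul_self {φ : M →ₗ[Rᵐᵒᵖ] R} {m : M}
    (hm : m = op (φ m) • m) : IsIdempotentElem (φ m) := by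
  change φ m * φ m = φ m
  conv_rhs => rw [hm, map_smul, op_smul_eq_mul]

lemma isIdempotentElem_opSmulRight {φ : M →ₗ[Rᵐᵒᵖ] R} {m : M}
    (hm : m = op (φ m) • m) : IsIdempotentElem (opSmulRight φ m) := by
  ext x
  change opSmulRight φ m (opSmulRight φ m x) = opSmulRight φ m x
  rw [opSmulRight_apply, opSmulRight_apply, map_smul, op_smul_eq_mul, op_mul, mul_smul, ← hm]

end OpSmulRight

/-- If `m₁ ≤⁻ m₂`, then there exist idempotents `f ∈ S` and `a ∈ R`
such that `m₁ = f(m₁) = f(m₂) = m₁·a = m₂·a`. -/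
theorem minusLE_exists_idempotents_eq (R : Type*) [Ring R] {M : Type*} [AddCommGroup M]
    [Module Rᵐᵒᵖ M] (m₁ m₂ : M) (h : MinusLE R m₁ m₂) :
    ∃ (f : Module.End Rᵐᵒᵖ M) (a : R), f * f = f ∧ a * a = a ∧
      m₁ = f m₁ ∧ f m₁ = f m₂ ∧ f m₂ = op a • m₁ ∧ op a • m₁ = op a • m₂ := by
  obtain ⟨φ, hm₁, hφ, hφm⟩ := h
  refine ⟨opSmulRight φ m₁, φ m₁, isIdempotentElem_opSmulRight hm₁,
    isIdempotentElem_of_eq_op_smul_self hm₁, hm₁, ?_, ?_, hφ m₁⟩ <;>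
    simp only [opSmulRight_apply, hφm]
end
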